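/- Let f(x,y) = sqrt((x+y−2)/(x+y)) − sqrt((x+y−2)/(x·y)). For all integers x, y with 3 ≤ x ≤ y, one has f(x,y) ≥ f(3,3) = sqrt(2/3) − 2/3. -/
import Mathlib


noncomputable def f (x y : ℝ) : ℝ :=
  Real.sqrt ((x + y - 2) / (x + y)) - Real.sqrt ((x + y - 2) / (x * y))

theorem f_ge_f_three_three (x y : ℤ) (hx : 3 ≤ x) (hxy : x ≤ y) :
    f x y ≥ f 3 3 ∧ f 3 3 = Real.sqrt (2 / 3) - 2 / 3 := by
  have h49 : Real.sqrt (4 / 9) = 2 / 3 := by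
    rw [show (4 : ℝ) / 9 = (2 / 3) ^ 2 by norm_num, Real.sqrt_sq (by norm_num)]
  have hf33 : f 3 3 = Real.sqrt (2 / 3) - 2 / 3 := by
    unfold f
    rw [show ((3 : ℝ) + 3 - 2) / (3 + 3) = 2 / 3 by norm_num,
        show ((3 : ℝ) + 3 - 2) / (3 * 3) = 4 / 9 by norm_num, h49]
  refine ⟨?_, hf33⟩
  rw [hf33]
  have ha : (3 : ℝ) ≤ (x : ℝ) := by exact_mod_cast hx
  have hb : (x : ℝ) ≤ (y : ℝ) := by exact_mod_cast hxy
  have hb3 : (3 : ℝ) ≤ (y : ℝ) := le_trans ha hb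
  set a := (x : ℝ)
  set b := (y : ℝ)
  have hs : (0 : ℝ) < a + b := by linarith
  have hp : (0 : ℝ) < a * b := by nlinarith
  have h1 : Real.sqrt (2 / 3) ≤ Real.sqrt ((a + b - 2) / (a + b)) := by
    apply Real.sqrt_le_sqrt
    rw [div_le_div_iff₀ (by norm_num) hs]
    nlinarith
  have h2 : Real.sqrt ((a + b - 2) / (a * b)) ≤ 2 / 3 := by
    rw [← h49]
    apply Real.sqrt_le_sqrt
    rw [div_le_div_iff₀ hp (by norm_num)]
    nlinarith [mul_nonneg (by linarith : (0:ℝ) ≤ a - 3) (by linarith : (0:ℝ) ≤ b - 3)]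
  unfold f
  linarith
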